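/- arXiv:hep-th/9607234 — 2 statements merged into one kernel-verified Lean document; each statement's English description precedes it below -/
import Mathlib

section
/- Let N ≥ 1, let p ≥ 2 be even, and for t = (t_1,…,t_p) ∈ ℝ^p with t_p < 0 define the one-matrix model partition function Z_N(t) := (1/N!) ∫_{ℝ^N} Δ(λ_1,…,λ_N)² exp( Σ_{a=1}^N Σ_{k=1}^p t_k λ_a^k ) dλ. Then Z_N is smooth on the open set { t ∈ ℝ^p : t_p < 0 } and satisfies the scaling Virasoro constraint (L_0): Σ_{k=1}^p k t_k ∂Z_N/∂t_k + N² Z_N = 0. -/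
open MeasureTheory

/-- The Vandermonde product `Δ(l₁,…,l_N) = ∏_{j<i} (l_i − l_j)`. -/
noncomputable def vdm {N : ℕ} (l : Fin N → ℝ) : ℝ :=
  ∏ i : Fin N, ∏ j ∈ Finset.Ioi i, (l j - l i)

open Finset NNReal Nat
section laplace

variable {α : Type*} [MeasurableSpace α] {μ : Measure α}
variable {E : Type*} [NormedAddCommGroup E] [NormedSpace ℝ E]

noncomputable def prodCMM (n : ℕ) (L : E →L[ℝ] ℝ) :
    ContinuousMultilinearMap ℝ (fun _ : Fin n => E) ℝ :=
  (ContinuousMultilinearMap.mkPiAlgebra ℝ (Fin n) ℝ).compContinuousLinearMap (fun _ => L)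

lemma prodCMM_apply (n : ℕ) (L : E →L[ℝ] ℝ) (v : Fin n → E) :
    prodCMM n L v = ∏ i, L (v i) := by
  simp [prodCMM]

lemma norm_prodCMM_le (n : ℕ) (L : E →L[ℝ] ℝ) : ‖prodCMM n L‖ ≤ ‖L‖ ^ n := by
  refine (ContinuousMultilinearMap.norm_compContinuousLinearMap_le _ _).trans ?_
  simp [ContinuousMultilinearMap.norm_mkPiAlgebra]

lemma continuous_prodCMM (n : ℕ) : Continuous fun L : E →L[ℝ] ℝ => prodCMM n L := by
  have : (fun L : E →L[ℝ] ℝ => prodCMM n L)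
      = fun L => (ContinuousMultilinearMap.mkPiAlgebra ℝ (Fin n)
          ℝ).compContinuousLinearMapLRight (fun _ : Fin n => L) := rfl
  rw [this]
  exact ((ContinuousMultilinearMap.mkPiAlgebra ℝ (Fin n)
    ℝ).compContinuousLinearMapLRight).cont.comp (continuous_pi fun _ => continuous_id)

theorem analyticAt_laplace (g : α → ℝ) (L : α → E →L[ℝ] ℝ)
    (hg : AEStronglyMeasurable g μ) (hL : AEStronglyMeasurable L μ)
    {r : ℝ≥0} (hr : 0 < r)
    (hint : Integrable (fun a => |g a| * Real.exp (r * ‖L a‖)) μ) :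
    AnalyticAt ℝ (fun s : E => ∫ a, g a * Real.exp (L a s) ∂μ) 0 := by
  have hr' : (0:ℝ) < r := hr
  set B : α → ℝ := fun a => |g a| * Real.exp (r * ‖L a‖) with hB
  have hBnn : ∀ a, 0 ≤ B a := fun a => mul_nonneg (abs_nonneg _) (Real.exp_pos _).le
  have keybound : ∀ (n : ℕ) (a : α), |g a| * ‖L a‖ ^ n ≤ (n ! : ℝ) / (r:ℝ) ^ n * B a := by
    intro n a
    have h2 : ‖L a‖ ^ n ≤ (n ! : ℝ) / (r:ℝ) ^ n * Real.exp (r * ‖L a‖) := by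
      rw [div_mul_eq_mul_div, le_div_iff₀ (by positivity)]
      calc ‖L a‖ ^ n * (r:ℝ) ^ n = ((r:ℝ) * ‖L a‖) ^ n := by rw [mul_pow]; ring
        _ ≤ (n ! : ℝ) * Real.exp ((r:ℝ) * ‖L a‖) := by
            have := Real.pow_div_factorial_le_exp (x := (r:ℝ) * ‖L a‖) (by positivity) n
            rw [div_le_iff₀ (by positivity : (0:ℝ) < (n ! : ℝ))] at this
            linarith [this]
    calc |g a| * ‖L a‖ ^ n
        ≤ |g a| * ((n ! : ℝ) / (r:ℝ) ^ n * Real.exp (r * ‖L a‖)) :=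
          mul_le_mul_of_nonneg_left h2 (abs_nonneg _)
      _ = (n ! : ℝ) / (r:ℝ) ^ n * B a := by rw [hB]; ring
  have habs : AEStronglyMeasurable (fun a => |g a|) μ := by
    simpa [Real.norm_eq_abs] using hg.norm
  have hGLmeas : ∀ n : ℕ, AEStronglyMeasurable (fun a => |g a| * ‖L a‖ ^ n) μ := by
    intro n
    exact habs.mul (((continuous_pow n).comp continuous_norm).comp_aestronglyMeasurable hL)
  have hGL : ∀ n : ℕ, Integrable (fun a => |g a| * ‖L a‖ ^ n) μ := by
    intro n
    refine (hint.const_mul ((n ! : ℝ) / (r:ℝ) ^ n)).mono' (hGLmeas n) ?_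
    filter_upwards with a
    rw [Real.norm_eq_abs, abs_of_nonneg (by positivity)]
    exact keybound n a
  have hFmeas : ∀ n : ℕ, AEStronglyMeasurable (fun a => g a • prodCMM n (L a)) μ :=
    fun n => hg.smul ((continuous_prodCMM n).comp_aestronglyMeasurable hL)
  have hFnorm : ∀ (n : ℕ) (a : α), ‖g a • prodCMM n (L a)‖ ≤ |g a| * ‖L a‖ ^ n := by
    intro n a
    refine (ContinuousMultilinearMap.opNorm_smul_le _ _).trans ?_
    rw [Real.norm_eq_abs]
    exact mul_le_mul_of_nonneg_left (norm_prodCMM_le _ _) (abs_nonneg _)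
  have hFint : ∀ n : ℕ, Integrable (fun a => g a • prodCMM n (L a)) μ := by
    intro n
    refine (hGL n).mono' (hFmeas n) ?_
    filter_upwards with a
    exact hFnorm n a
  set P : FormalMultilinearSeries ℝ E ℝ :=
    fun n => (n ! : ℝ)⁻¹ • ∫ a, g a • prodCMM n (L a) ∂μ with hP
  have hradius : ∀ n : ℕ, ‖P n‖ * (r:ℝ) ^ n ≤ ∫ a, B a ∂μ := by
    intro n
    have h1 : ‖P n‖ ≤ (n ! : ℝ)⁻¹ * ∫ a, |g a| * ‖L a‖ ^ n ∂μ := by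
      show ‖(n ! : ℝ)⁻¹ • ∫ a, g a • prodCMM n (L a) ∂μ‖ ≤ _
      refine (ContinuousMultilinearMap.opNorm_smul_le _ _).trans ?_
      rw [Real.norm_eq_abs, abs_of_nonneg (by positivity : (0:ℝ) ≤ (n ! : ℝ)⁻¹)]
      exact mul_le_mul_of_nonneg_left
        ((norm_integral_le_integral_norm _).trans
          (integral_mono (hFint n).norm (hGL n) (fun a => hFnorm n a)))
        (by positivity)
    have h2 : ∫ a, |g a| * ‖L a‖ ^ n ∂μ ≤ (n ! : ℝ) / (r:ℝ) ^ n * ∫ a, B a ∂μ := by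
      rw [← integral_const_mul]
      exact integral_mono (hGL n) (hint.const_mul _) (keybound n)
    have hn : (0:ℝ) < (n ! : ℝ) := by positivity
    calc ‖P n‖ * (r:ℝ) ^ n
        ≤ ((n ! : ℝ)⁻¹ * ((n ! : ℝ) / (r:ℝ) ^ n * ∫ a, B a ∂μ)) * (r:ℝ) ^ n := by
          refine mul_le_mul_of_nonneg_right (h1.trans ?_) (by positivity)
          exact mul_le_mul_of_nonneg_left h2 (by positivity)
      _ = ∫ a, B a ∂μ := by field_simp
  have hball : HasFPowerSeriesOnBall (fun s : E => ∫ a, g a * Real.exp (L a s) ∂μ) P 0 r := by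
    constructor
    · exact P.le_radius_of_bound _ hradius
    · exact_mod_cast hr
    · intro y hy
      have hy' : ‖y‖ < (r:ℝ) := by
        rw [EMetric.mem_ball, edist_zero_right] at hy
        exact_mod_cast hy
      have hynn : 0 ≤ ‖y‖ := norm_nonneg y
      -- integrability of each term
      have hGnint : ∀ n : ℕ, Integrable (fun a => g a * ((n ! : ℝ)⁻¹ * (L a y) ^ n)) μ := by
        intro n
        have hmeas : AEStronglyMeasurable (fun a => g a * ((n ! : ℝ)⁻¹ * (L a y) ^ n)) μ := by
          refine hg.mul (aestronglyMeasurable_const.mul ?_)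
          exact ((continuous_pow n).comp
            (ContinuousLinearMap.apply ℝ ℝ y).continuous).comp_aestronglyMeasurable hL
        refine ((hGL n).const_mul ((n ! : ℝ)⁻¹ * ‖y‖ ^ n)).mono' hmeas ?_
        filter_upwards with a
        rw [Real.norm_eq_abs, abs_mul, abs_mul, abs_pow,
          abs_of_nonneg (by positivity : (0:ℝ) ≤ (n ! : ℝ)⁻¹)]
        have hLy : |(L a) y| ≤ ‖L a‖ * ‖y‖ := by
          rw [← Real.norm_eq_abs]; exact (L a).le_opNorm y
        calc |g a| * ((n ! : ℝ)⁻¹ * |(L a) y| ^ n)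
            ≤ |g a| * ((n ! : ℝ)⁻¹ * (‖L a‖ * ‖y‖) ^ n) := by
              refine mul_le_mul_of_nonneg_left (mul_le_mul_of_nonneg_left
                (pow_le_pow_left₀ (abs_nonneg _) hLy n) (by positivity)) (abs_nonneg _)
          _ = (n ! : ℝ)⁻¹ * ‖y‖ ^ n * (|g a| * ‖L a‖ ^ n) := by rw [mul_pow]; ring
      -- summability of integrals of norms
      have hsummable : Summable (fun n : ℕ => ∫ a, ‖g a * ((n ! : ℝ)⁻¹ * (L a y) ^ n)‖ ∂μ) := by
        have hgeo : Summable (fun n : ℕ => (‖y‖ / (r:ℝ)) ^ n * ∫ a, B a ∂μ) := by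
          refine Summable.mul_right _ ?_
          exact summable_geometric_of_lt_one (by positivity) (by rw [div_lt_one hr']; exact hy')
        refine Summable.of_nonneg_of_le (fun n => integral_nonneg fun a => norm_nonneg _)
          (fun n => ?_) hgeo
        rw [← integral_const_mul]
        refine integral_mono (hGnint n).norm (hint.const_mul _) fun a => ?_
        rw [Real.norm_eq_abs, abs_mul, abs_mul, abs_pow,
          abs_of_nonneg (by positivity : (0:ℝ) ≤ (n ! : ℝ)⁻¹)]
        have hLy : |(L a) y| ≤ ‖L a‖ * ‖y‖ := by
          rw [← Real.norm_eq_abs]; exact (L a).le_opNorm y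
        have h3 : ((r:ℝ) * ‖L a‖) ^ n / (n !:ℝ) ≤ Real.exp ((r:ℝ) * ‖L a‖) :=
          Real.pow_div_factorial_le_exp (x := (r:ℝ) * ‖L a‖) (by positivity) n
        calc |g a| * ((n ! : ℝ)⁻¹ * |(L a) y| ^ n)
            ≤ |g a| * ((n ! : ℝ)⁻¹ * (‖L a‖ * ‖y‖) ^ n) := by
              refine mul_le_mul_of_nonneg_left (mul_le_mul_of_nonneg_left
                (pow_le_pow_left₀ (abs_nonneg _) hLy n) (by positivity)) (abs_nonneg _)
          _ = (‖y‖ / (r:ℝ)) ^ n * (|g a| * (((r:ℝ) * ‖L a‖) ^ n / (n !:ℝ))) := by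
              field_simp
              rw [mul_assoc, ← mul_pow]
              congr 2
              rw [div_mul_eq_mul_div, eq_div_iff hr'.ne']
              ring
          _ ≤ (‖y‖ / (r:ℝ)) ^ n * B a := by
              refine mul_le_mul_of_nonneg_left
                (mul_le_mul_of_nonneg_left h3 (abs_nonneg _)) (by positivity)
      have hsum := hasSum_integral_of_summable_integral_norm hGnint hsummable
      -- identify the tsum
      have hts : ∀ a, (∑' n : ℕ, g a * ((n ! : ℝ)⁻¹ * (L a y) ^ n)) = g a * Real.exp (L a y) := by
        intro a
        rw [_root_.tsum_mul_left]
        congr 1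
        rw [Real.exp_eq_exp_ℝ, NormedSpace.exp_eq_tsum ℝ]
        simp [smul_eq_mul]
      -- identify P n applied
      have happly : ∀ n : ℕ,
          (P n) (fun _ => y) = ∫ a, g a * ((n ! : ℝ)⁻¹ * (L a y) ^ n) ∂μ := by
        intro n
        have h0 : (P n) (fun _ => y)
            = (n ! : ℝ)⁻¹ * ((ContinuousMultilinearMap.apply ℝ (fun _ : Fin n => E) ℝ
                (fun _ => y)) (∫ a, g a • prodCMM n (L a) ∂μ)) := by
          simp [hP]
        rw [h0, ← ContinuousLinearMap.integral_comp_comm _ (hFint n)]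
        rw [← integral_const_mul]
        refine integral_congr_ae (Filter.Eventually.of_forall fun a => ?_)
        simp only [ContinuousMultilinearMap.apply_apply, ContinuousMultilinearMap.smul_apply,
          prodCMM_apply, smul_eq_mul]
        rw [Finset.prod_const, Finset.card_univ, Fintype.card_fin]
        ring
      simp only [zero_add]
      have hiEq : (∫ a, (∑' n : ℕ, g a * ((n ! : ℝ)⁻¹ * (L a) y ^ n)) ∂μ)
          = ∫ a, g a * Real.exp ((L a) y) ∂μ :=
        integral_congr_ae (Filter.Eventually.of_forall fun a => hts a)
      have hfinal : HasSum (fun n : ℕ => ∫ a, g a * ((n ! : ℝ)⁻¹ * (L a) y ^ n) ∂μ)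
          (∫ a, g a * Real.exp ((L a) y) ∂μ) := hiEq ▸ hsum
      have hfe : (fun n : ℕ => (P n) fun _ => y)
          = fun n : ℕ => ∫ a, g a * ((n ! : ℝ)⁻¹ * (L a) y ^ n) ∂μ := funext happly
      rw [hfe]
      exact hfinal
  exact ⟨P, r, hball⟩

end laplace


lemma integrable_oneDim (q D : ℕ) (hq : 1 ≤ q) {c : ℝ} (hc : c < 0) (m : Fin q → ℝ) :
    Integrable (fun x : ℝ => (1 + |x|) ^ D *
      Real.exp (c * |x| ^ (q + 1) + ∑ k : Fin q, m k * |x| ^ ((k : ℕ) + 1))) := by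
  set b : ℝ := -c / 2 with hb
  have hb0 : 0 < b := by rw [hb]; linarith
  obtain ⟨K, hK⟩ : ∃ K : ℝ, ∀ x : ℝ, (1 + |x|) ^ D *
      Real.exp (c * |x| ^ (q + 1) + ∑ k : Fin q, m k * |x| ^ ((k : ℕ) + 1))
      ≤ K * Real.exp (-b * x ^ 2) := by
    set S : ℝ := D + ∑ k : Fin q, |m k| with hS
    have hS0 : 0 ≤ S := by
      rw [hS]; positivity
    set R : ℝ := max 1 (2 * S / (-c)) with hR
    have hR1 : (1:ℝ) ≤ R := le_max_left _ _
    refine ⟨Real.exp (b + S * R ^ q), fun x => ?_⟩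
    set u := |x| with hu
    have hu0 : 0 ≤ u := abs_nonneg x
    have hx2 : x ^ 2 = u ^ 2 := (sq_abs x).symm
    have h1 : (1 + u) ^ D ≤ Real.exp (D * u) := by
      calc (1 + u) ^ D ≤ Real.exp u ^ D := by
            refine pow_le_pow_left₀ (by positivity) ?_ D
            linarith [Real.add_one_le_exp u]
        _ = Real.exp (D * u) := by
            rw [← Real.exp_nat_mul]
    have hMax : ∀ j : ℕ, 1 ≤ j → j ≤ q → u ^ j ≤ max 1 u ^ q := by
      intro j hj1 hjq
      calc u ^ j ≤ max 1 u ^ j := pow_le_pow_left₀ hu0 (le_max_right _ _) j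
        _ ≤ max 1 u ^ q := pow_le_pow_right₀ (le_max_left _ _) hjq
    have h3 : (D:ℝ) * u + ∑ k : Fin q, m k * u ^ ((k:ℕ) + 1) ≤ S * max 1 u ^ q := by
      have hterm : ∀ k : Fin q, m k * u ^ ((k:ℕ) + 1) ≤ |m k| * max 1 u ^ q := by
        intro k
        calc m k * u ^ ((k:ℕ) + 1) ≤ |m k| * u ^ ((k:ℕ) + 1) := by
              refine mul_le_mul_of_nonneg_right (le_abs_self _) (by positivity)
          _ ≤ |m k| * max 1 u ^ q := by
              refine mul_le_mul_of_nonneg_left (hMax _ (by omega) (by omega)) (abs_nonneg _)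
      calc (D:ℝ) * u + ∑ k : Fin q, m k * u ^ ((k:ℕ) + 1)
          ≤ (D:ℝ) * max 1 u ^ q + ∑ k : Fin q, |m k| * max 1 u ^ q := by
            refine add_le_add ?_ (Finset.sum_le_sum fun k _ => hterm k)
            refine mul_le_mul_of_nonneg_left ?_ (by positivity)
            calc u ≤ max 1 u := le_max_right _ _
              _ = max 1 u ^ 1 := (pow_one _).symm
              _ ≤ max 1 u ^ q := pow_le_pow_right₀ (le_max_left _ _) hq
        _ = S * max 1 u ^ q := by rw [hS, add_mul, Finset.sum_mul]
    have h2 : u ^ 2 ≤ u ^ (q + 1) + 1 := by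
      rcases le_total u 1 with h | h
      · have : u ^ 2 ≤ 1 := pow_le_one₀ hu0 h
        have : (0:ℝ) ≤ u ^ (q+1) := by positivity
        linarith
      · have : u ^ 2 ≤ u ^ (q + 1) := pow_le_pow_right₀ h (by omega)
        linarith
    rw [← Real.exp_add]
    calc (1 + u) ^ D * Real.exp (c * u ^ (q + 1) + ∑ k : Fin q, m k * u ^ ((k:ℕ) + 1))
        ≤ Real.exp (D * u) * Real.exp (c * u ^ (q + 1) + ∑ k : Fin q, m k * u ^ ((k:ℕ) + 1)) :=
          mul_le_mul_of_nonneg_right h1 (Real.exp_pos _).le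
      _ = Real.exp (D * u + (c * u ^ (q + 1) + ∑ k : Fin q, m k * u ^ ((k:ℕ) + 1))) := by
          rw [← Real.exp_add]
      _ ≤ Real.exp (b + S * R ^ q + -b * x ^ 2) := by
          apply Real.exp_le_exp.2
          rw [hx2]
          -- goal : D*u + (c*u^{q+1} + Σ) ≤ b + S*R^q + -b*u²
          have hbu : b * u ^ 2 ≤ b * u ^ (q+1) + b := by
            calc b * u ^ 2 ≤ b * (u ^ (q+1) + 1) := mul_le_mul_of_nonneg_left h2 hb0.le
              _ = b * u ^ (q+1) + b := by ring
          rcases le_total u R with h | h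
          · -- small u
            have hMR : max 1 u ^ q ≤ R ^ q :=
              pow_le_pow_left₀ (le_trans zero_le_one (le_max_left _ _)) (max_le hR1 h) q
            have hcb : (c + b) * u ^ (q+1) ≤ 0 := by
              apply mul_nonpos_of_nonpos_of_nonneg
              · rw [hb]; linarith
              · positivity
            have := h3.trans (mul_le_mul_of_nonneg_left hMR hS0)
            nlinarith [this, hbu, hcb]
          · -- large u
            have hu1 : (1:ℝ) ≤ u := hR1.trans h
            have hmax : max 1 u = u := max_eq_right hu1
            rw [hmax] at h3
            -- (c+b) u^{q+1} + S u^q ≤ 0 : since (c+b) = c/2, u ≥ R ≥ 2S/(-c)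
            have hkey : (c + b) * u ^ (q+1) + S * u ^ q ≤ 0 := by
              have hcb : c + b = c / 2 := by rw [hb]; ring
              have huR : 2 * S / (-c) ≤ u := (le_max_right _ _).trans h
              have hucu : c / 2 * u ≤ -S := by
                rw [div_le_iff₀ (by linarith : (0:ℝ) < -c)] at huR
                nlinarith
              have : u ^ (q+1) = u * u ^ q := by ring
              rw [hcb, this]
              have huq : (0:ℝ) ≤ u ^ q := by positivity
              nlinarith
            have hRq : (0:ℝ) ≤ S * R ^ q := by positivity
            nlinarith [h3, hbu, hkey]
  refine ((integrable_exp_neg_mul_sq hb0).const_mul K).mono' ?_ ?_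
  · apply Continuous.aestronglyMeasurable
    apply Continuous.mul
    · exact (continuous_const.add (continuous_abs)).pow D
    · apply Real.continuous_exp.comp
      apply Continuous.add
      · exact continuous_const.mul ((continuous_abs).pow (q+1))
      · exact continuous_finset_sum _ fun k _ => continuous_const.mul ((continuous_abs).pow _)
  · filter_upwards with x
    rw [Real.norm_eq_abs, abs_of_nonneg (by positivity)]
    exact hK x


noncomputable def phiMap (N p : ℕ) (lam : Fin N → ℝ) : (Fin p → ℝ) →L[ℝ] ℝ :=
  ∑ k : Fin p, (∑ a, lam a ^ ((k : ℕ) + 1)) • ContinuousLinearMap.proj k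

lemma phiMap_apply (N p : ℕ) (lam : Fin N → ℝ) (s : Fin p → ℝ) :
    phiMap N p lam s = ∑ k : Fin p, s k * ∑ a, lam a ^ ((k : ℕ) + 1) := by
  simp [phiMap, ContinuousLinearMap.sum_apply, ContinuousLinearMap.smul_apply,
    ContinuousLinearMap.proj_apply, smul_eq_mul, mul_comm]

lemma phiMap_norm_le (N p : ℕ) (lam : Fin N → ℝ) :
    ‖phiMap N p lam‖ ≤ ∑ k : Fin p, ∑ a, |lam a| ^ ((k : ℕ) + 1) := by
  refine ContinuousLinearMap.opNorm_le_bound _ (by positivity) fun s => ?_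
  rw [phiMap_apply, Real.norm_eq_abs]
  calc |∑ k : Fin p, s k * ∑ a, lam a ^ ((k : ℕ) + 1)|
      ≤ ∑ k : Fin p, |s k * ∑ a, lam a ^ ((k : ℕ) + 1)| := Finset.abs_sum_le_sum_abs _ _
    _ ≤ ∑ k : Fin p, (∑ a, |lam a| ^ ((k : ℕ) + 1)) * ‖s‖ := by
        refine Finset.sum_le_sum fun k _ => ?_
        rw [abs_mul]
        have h1 : |s k| ≤ ‖s‖ := by
          rw [← Real.norm_eq_abs]; exact norm_le_pi_norm s k
        have h2 : |∑ a, lam a ^ ((k : ℕ) + 1)| ≤ ∑ a, |lam a| ^ ((k : ℕ) + 1) := by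
          refine (Finset.abs_sum_le_sum_abs _ _).trans ?_
          refine Finset.sum_le_sum fun a _ => ?_
          rw [abs_pow]
        calc |s k| * |∑ a, lam a ^ ((k : ℕ) + 1)|
            ≤ ‖s‖ * (∑ a, |lam a| ^ ((k : ℕ) + 1)) :=
              mul_le_mul h1 h2 (abs_nonneg _) (norm_nonneg _)
          _ = (∑ a, |lam a| ^ ((k : ℕ) + 1)) * ‖s‖ := mul_comm _ _
    _ = (∑ k : Fin p, ∑ a, |lam a| ^ ((k : ℕ) + 1)) * ‖s‖ := by rw [Finset.sum_mul]

lemma continuous_phiMap (N p : ℕ) : Continuous fun lam : Fin N → ℝ => phiMap N p lam := by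
  unfold phiMap
  refine continuous_finset_sum _ fun k _ => ?_
  exact (continuous_finset_sum _ fun a _ => (continuous_apply a).pow _).smul continuous_const

lemma continuous_vdm (N : ℕ) : Continuous fun lam : Fin N → ℝ => vdm lam := by
  unfold vdm
  refine continuous_finset_prod _ fun i _ => ?_
  exact continuous_finset_prod _ fun j _ => (continuous_apply j).sub (continuous_apply i)

lemma vdm_abs_le (N : ℕ) (lam : Fin N → ℝ) :
    |vdm lam| ≤ (2 * (1 + ‖lam‖)) ^ (∑ i : Fin N, (Finset.Ioi i).card) := by
  unfold vdm
  rw [Finset.abs_prod]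
  calc ∏ i : Fin N, |∏ j ∈ Finset.Ioi i, (lam j - lam i)|
      = ∏ i : Fin N, ∏ j ∈ Finset.Ioi i, |lam j - lam i| := by
        refine Finset.prod_congr rfl fun i _ => Finset.abs_prod _ _
    _ ≤ ∏ i : Fin N, ∏ j ∈ Finset.Ioi i, (2 * (1 + ‖lam‖)) := by
        refine Finset.prod_le_prod (fun i _ => Finset.prod_nonneg fun j _ => abs_nonneg _)
          fun i _ => ?_
        refine Finset.prod_le_prod (fun j _ => abs_nonneg _) fun j _ => ?_
        have h1 : |lam j| ≤ ‖lam‖ := by rw [← Real.norm_eq_abs]; exact norm_le_pi_norm lam j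
        have h2 : |lam i| ≤ ‖lam‖ := by rw [← Real.norm_eq_abs]; exact norm_le_pi_norm lam i
        calc |lam j - lam i| ≤ |lam j| + |lam i| := abs_sub _ _
          _ ≤ 2 * (1 + ‖lam‖) := by linarith
    _ = (2 * (1 + ‖lam‖)) ^ (∑ i : Fin N, (Finset.Ioi i).card) := by
        rw [← Finset.prod_pow_eq_pow_sum]
        exact Finset.prod_congr rfl fun i _ => Finset.prod_const _

lemma one_add_norm_le_prod (N : ℕ) (hN : 1 ≤ N) (lam : Fin N → ℝ) :
    1 + ‖lam‖ ≤ ∏ a : Fin N, (1 + |lam a|) := by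
  have hne : (Finset.univ : Finset (Fin N)).Nonempty := by
    rw [Finset.univ_nonempty_iff]
    exact Fin.pos_iff_nonempty.mp (by omega)
  obtain ⟨a₀, -, ha₀⟩ := Finset.exists_mem_eq_sup Finset.univ hne fun a => (‖lam a‖₊ : ℝ≥0)
  have hnorm : ‖lam‖ = |lam a₀| := by
    rw [Pi.norm_def, ha₀]
    simp [Real.norm_eq_abs]
  rw [hnorm]
  have h1 : (1:ℝ) ≤ ∏ a ∈ Finset.univ.erase a₀, (1 + |lam a|) := by
    have := Finset.prod_le_prod (f := fun _ : Fin N => (1:ℝ)) (g := fun a => 1 + |lam a|)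
      (s := Finset.univ.erase a₀) (fun a _ => by show (0:ℝ) ≤ 1; norm_num)
      (fun a _ => by show (1:ℝ) ≤ 1 + |lam a|; have := abs_nonneg (lam a); linarith)
    simpa using this
  calc 1 + |lam a₀| = (1 + |lam a₀|) * 1 := (mul_one _).symm
    _ ≤ (1 + |lam a₀|) * ∏ a ∈ Finset.univ.erase a₀, (1 + |lam a|) := by
        refine mul_le_mul_of_nonneg_left h1 ?_
        have := abs_nonneg (lam a₀); linarith
    _ = ∏ a : Fin N, (1 + |lam a|) :=
        Finset.mul_prod_erase Finset.univ (fun a => 1 + |lam a|) (Finset.mem_univ a₀)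

lemma master_integrable (N q : ℕ) (hN : 1 ≤ N) (hq : 1 ≤ q) (hpe : Even (q + 1))
    (t₀ : Fin (q + 1) → ℝ) (ht : t₀ (Fin.last q) < 0) :
    Integrable (fun lam : Fin N → ℝ =>
      |vdm lam ^ 2 * Real.exp (∑ a, ∑ k : Fin (q + 1), t₀ k * lam a ^ ((k : ℕ) + 1))| *
        Real.exp ((-t₀ (Fin.last q) / 2) * ‖phiMap N (q + 1) lam‖)) := by
  set r : ℝ := -t₀ (Fin.last q) / 2 with hr
  have hr0 : 0 < r := by rw [hr]; linarith
  set c : ℝ := t₀ (Fin.last q) / 2 with hc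
  have hc0 : c < 0 := by rw [hc]; linarith
  set e : ℕ := ∑ i : Fin N, (Finset.Ioi i).card with he
  set D : ℕ := 2 * e with hD
  set m : Fin q → ℝ := fun k => |t₀ k.castSucc| + r with hm
  set G : ℝ → ℝ := fun x => (1 + |x|) ^ D *
      Real.exp (c * |x| ^ (q + 1) + ∑ k : Fin q, m k * |x| ^ ((k : ℕ) + 1)) with hG
  have hGnn : ∀ x, 0 ≤ G x := fun x => by rw [hG]; positivity
  have hGint : Integrable G := integrable_oneDim q D hq hc0 m
  have hBint : Integrable (fun lam : Fin N → ℝ => (2:ℝ) ^ D * ∏ a, G (lam a)) :=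
    (Integrable.fin_nat_prod fun _ => hGint).const_mul _
  refine hBint.mono' ?_ ?_
  · apply Continuous.aestronglyMeasurable
    have cV : Continuous fun lam : Fin N → ℝ =>
        ∑ a, ∑ k : Fin (q + 1), t₀ k * lam a ^ ((k : ℕ) + 1) := by
      refine continuous_finset_sum _ fun a _ => continuous_finset_sum _ fun k _ => ?_
      exact continuous_const.mul ((continuous_apply a).pow _)
    exact (((continuous_vdm N).pow 2).mul (Real.continuous_exp.comp cV)).abs.mul
      (Real.continuous_exp.comp (continuous_const.mul ((continuous_phiMap N (q + 1)).norm)))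
  · filter_upwards with lam
    have hVnn : (0:ℝ) ≤ vdm lam ^ 2 := sq_nonneg _
    rw [Real.norm_eq_abs, abs_of_nonneg (by positivity), abs_mul,
      abs_of_nonneg hVnn, abs_of_nonneg (Real.exp_pos _).le, mul_assoc, ← Real.exp_add]
    -- Step A : exponent bound
    have hstepA : (∑ a, ∑ k : Fin (q + 1), t₀ k * lam a ^ ((k : ℕ) + 1))
        + r * ‖phiMap N (q + 1) lam‖
        ≤ ∑ a, (c * |lam a| ^ (q + 1) + ∑ k : Fin q, m k * |lam a| ^ ((k : ℕ) + 1)) := by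
      have hL1 : r * ‖phiMap N (q + 1) lam‖
          ≤ ∑ a, ∑ k : Fin (q + 1), r * |lam a| ^ ((k : ℕ) + 1) := by
        calc r * ‖phiMap N (q + 1) lam‖
            ≤ r * ∑ k : Fin (q + 1), ∑ a, |lam a| ^ ((k : ℕ) + 1) :=
              mul_le_mul_of_nonneg_left (phiMap_norm_le N (q + 1) lam) hr0.le
          _ = ∑ a, ∑ k : Fin (q + 1), r * |lam a| ^ ((k : ℕ) + 1) := by
              rw [Finset.mul_sum, Finset.sum_comm]
              exact Finset.sum_congr rfl fun a _ => by rw [Finset.mul_sum]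
      have hper : ∀ a : Fin N,
          (∑ k : Fin (q + 1), t₀ k * lam a ^ ((k : ℕ) + 1))
            + ∑ k : Fin (q + 1), r * |lam a| ^ ((k : ℕ) + 1)
          ≤ c * |lam a| ^ (q + 1) + ∑ k : Fin q, m k * |lam a| ^ ((k : ℕ) + 1) := by
        intro a
        set x := lam a with hx
        rw [← Finset.sum_add_distrib, Fin.sum_univ_castSucc]
        have hlast : t₀ (Fin.last q) * x ^ ((Fin.last q : ℕ) + 1)
            + r * |x| ^ ((Fin.last q : ℕ) + 1) = c * |x| ^ (q + 1) := by
          have hxp : x ^ (q + 1) = |x| ^ (q + 1) := (hpe.pow_abs x).symm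
          simp only [Fin.val_last]
          rw [hxp, hc, hr]; ring
        have hcs : ∀ k : Fin q,
            t₀ k.castSucc * x ^ ((k.castSucc : ℕ) + 1)
              + r * |x| ^ ((k.castSucc : ℕ) + 1) ≤ m k * |x| ^ ((k : ℕ) + 1) := by
          intro k
          have h1 : t₀ k.castSucc * x ^ ((k : ℕ) + 1) ≤ |t₀ k.castSucc| * |x| ^ ((k : ℕ) + 1) := by
            calc t₀ k.castSucc * x ^ ((k : ℕ) + 1) ≤ |t₀ k.castSucc * x ^ ((k : ℕ) + 1)| :=
                  le_abs_self _
              _ = |t₀ k.castSucc| * |x| ^ ((k : ℕ) + 1) := by rw [abs_mul, abs_pow]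
          simp only [Fin.coe_castSucc]
          rw [hm]
          calc t₀ k.castSucc * x ^ ((k : ℕ) + 1) + r * |x| ^ ((k : ℕ) + 1)
              ≤ |t₀ k.castSucc| * |x| ^ ((k : ℕ) + 1) + r * |x| ^ ((k : ℕ) + 1) :=
                add_le_add_left h1 _
            _ = (|t₀ k.castSucc| + r) * |x| ^ ((k : ℕ) + 1) := by ring
        calc (∑ k : Fin q, (t₀ k.castSucc * x ^ ((k.castSucc : ℕ) + 1)
                + r * |x| ^ ((k.castSucc : ℕ) + 1)))
              + (t₀ (Fin.last q) * x ^ ((Fin.last q : ℕ) + 1)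
                + r * |x| ^ ((Fin.last q : ℕ) + 1))
            ≤ (∑ k : Fin q, m k * |x| ^ ((k : ℕ) + 1)) + c * |x| ^ (q + 1) := by
              exact add_le_add (Finset.sum_le_sum fun k _ => hcs k) (le_of_eq hlast)
          _ = c * |x| ^ (q + 1) + ∑ k : Fin q, m k * |x| ^ ((k : ℕ) + 1) := by ring
      calc (∑ a, ∑ k : Fin (q + 1), t₀ k * lam a ^ ((k : ℕ) + 1))
            + r * ‖phiMap N (q + 1) lam‖
          ≤ (∑ a, ∑ k : Fin (q + 1), t₀ k * lam a ^ ((k : ℕ) + 1))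
            + ∑ a, ∑ k : Fin (q + 1), r * |lam a| ^ ((k : ℕ) + 1) := by linarith [hL1]
        _ = ∑ a, ((∑ k : Fin (q + 1), t₀ k * lam a ^ ((k : ℕ) + 1))
            + ∑ k : Fin (q + 1), r * |lam a| ^ ((k : ℕ) + 1)) := by
            rw [Finset.sum_add_distrib]
        _ ≤ ∑ a, (c * |lam a| ^ (q + 1) + ∑ k : Fin q, m k * |lam a| ^ ((k : ℕ) + 1)) :=
            Finset.sum_le_sum fun a _ => hper a
    -- Step B : prefactor bound
    have hstepB : vdm lam ^ 2 ≤ (2:ℝ) ^ D * ∏ a, (1 + |lam a|) ^ D := by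
      have h1 : vdm lam ^ 2 = |vdm lam| ^ 2 := (sq_abs _).symm
      have h2 : |vdm lam| ^ 2 ≤ ((2 * (1 + ‖lam‖)) ^ e) ^ 2 := by
        refine pow_le_pow_left₀ (abs_nonneg _) (vdm_abs_le N lam) 2
      have hnn : (0:ℝ) ≤ 1 + ‖lam‖ := by positivity
      have h3 : ((2 * (1 + ‖lam‖)) ^ e) ^ 2 = (2:ℝ) ^ D * (1 + ‖lam‖) ^ D := by
        rw [← pow_mul, mul_pow, hD, mul_comm 2 e]
      have h4 : (1 + ‖lam‖) ^ D ≤ ∏ a, (1 + |lam a|) ^ D := by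
        rw [Finset.prod_pow]
        exact pow_le_pow_left₀ (by positivity) (one_add_norm_le_prod N hN lam) D
      calc vdm lam ^ 2 = |vdm lam| ^ 2 := h1
        _ ≤ ((2 * (1 + ‖lam‖)) ^ e) ^ 2 := h2
        _ = (2:ℝ) ^ D * (1 + ‖lam‖) ^ D := h3
        _ ≤ (2:ℝ) ^ D * ∏ a, (1 + |lam a|) ^ D :=
            mul_le_mul_of_nonneg_left h4 (by positivity)
    calc vdm lam ^ 2 * Real.exp ((∑ a, ∑ k : Fin (q + 1), t₀ k * lam a ^ ((k : ℕ) + 1))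
            + r * ‖phiMap N (q + 1) lam‖)
        ≤ ((2:ℝ) ^ D * ∏ a, (1 + |lam a|) ^ D) *
            Real.exp (∑ a, (c * |lam a| ^ (q + 1)
              + ∑ k : Fin q, m k * |lam a| ^ ((k : ℕ) + 1))) := by
          refine mul_le_mul hstepB (Real.exp_le_exp.2 hstepA) (Real.exp_pos _).le ?_
          positivity
      _ = (2:ℝ) ^ D * ∏ a, G (lam a) := by
          rw [Real.exp_sum, mul_assoc, ← Finset.prod_mul_distrib]

lemma vdm_smul (N : ℕ) (s : ℝ) (lam : Fin N → ℝ) :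
    vdm (s • lam) = s ^ (∑ i : Fin N, (Finset.Ioi i).card) * vdm lam := by
  unfold vdm
  rw [← Finset.prod_pow_eq_pow_sum, ← Finset.prod_mul_distrib]
  refine Finset.prod_congr rfl fun i _ => ?_
  rw [← Finset.prod_const, ← Finset.prod_mul_distrib]
  refine Finset.prod_congr rfl fun j _ => ?_
  simp only [Pi.smul_apply, smul_eq_mul]
  ring

lemma sum_Ioi_card (N : ℕ) : 2 * (∑ i : Fin N, (Finset.Ioi i).card) + N = N * N := by
  have h1 : (∑ i : Fin N, (Finset.Ioi i).card) = ∑ i ∈ Finset.range N, i := by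
    calc (∑ i : Fin N, (Finset.Ioi i).card) = ∑ i : Fin N, (N - 1 - (i : ℕ)) :=
          Finset.sum_congr rfl fun i _ => Fin.card_Ioi i
      _ = ∑ i ∈ Finset.range N, (N - 1 - i) := Fin.sum_univ_eq_sum_range _ _
      _ = ∑ i ∈ Finset.range N, i := Finset.sum_range_reflect (fun j => j) N
  rw [h1]
  have h2 := Finset.sum_range_id_mul_two N
  rcases N with _ | n
  · simp
  · rw [Nat.succ_sub_one] at h2
    calc 2 * (∑ i ∈ Finset.range (n + 1), i) + (n + 1)
        = (∑ i ∈ Finset.range (n + 1), i) * 2 + (n + 1) := by ring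
      _ = (n + 1) * n + (n + 1) := by rw [h2]
      _ = (n + 1) * (n + 1) := by ring



theorem stmt16 (N p : ℕ) (hN : 1 ≤ N) (hp : 2 ≤ p) (hpe : Even p)
    (Z : (Fin p → ℝ) → ℝ)
    (hZ : ∀ t, Z t = (1 / (N.factorial : ℝ)) *
      ∫ lam : Fin N → ℝ, (vdm lam) ^ 2 *
        Real.exp (∑ a : Fin N, ∑ k : Fin p, t k * lam a ^ ((k : ℕ) + 1))) :
    ContDiffOn ℝ (⊤ : ℕ∞) Z { t : Fin p → ℝ | t ⟨p - 1, by omega⟩ < 0 } ∧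
    ∀ t : Fin p → ℝ, t ⟨p - 1, by omega⟩ < 0 →
      (∑ i : Fin p, ((i : ℕ) + 1 : ℝ) * t i * fderiv ℝ Z t (Pi.single i 1)) +
        (N : ℝ) ^ 2 * Z t = 0 := by
  obtain ⟨q, rfl⟩ : ∃ q, p = q + 1 := ⟨p - 1, by omega⟩
  have hq : 1 ≤ q := by omega
  have hUopen : IsOpen { t : Fin (q + 1) → ℝ | t (Fin.last q) < 0 } :=
    isOpen_lt (continuous_apply _) continuous_const
  -- analyticity at every point of U
  have hA : ∀ t₀ : Fin (q + 1) → ℝ, t₀ (Fin.last q) < 0 → AnalyticAt ℝ Z t₀ := by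
    intro t₀ ht₀
    set r : ℝ≥0 := Real.toNNReal (-t₀ (Fin.last q) / 2) with hrdef
    have hrr : (r : ℝ) = -t₀ (Fin.last q) / 2 := Real.coe_toNNReal _ (by linarith)
    have hrpos : 0 < r := Real.toNNReal_pos.2 (by linarith)
    have hgcont : Continuous (fun lam : Fin N → ℝ => vdm lam ^ 2 *
        Real.exp (∑ a, ∑ k : Fin (q + 1), t₀ k * lam a ^ ((k : ℕ) + 1))) := by
      refine ((continuous_vdm N).pow 2).mul (Real.continuous_exp.comp ?_)
      refine continuous_finset_sum _ fun a _ => continuous_finset_sum _ fun k _ => ?_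
      exact continuous_const.mul ((continuous_apply a).pow _)
    have hint : Integrable (fun lam : Fin N → ℝ =>
        |vdm lam ^ 2 * Real.exp (∑ a, ∑ k : Fin (q + 1), t₀ k * lam a ^ ((k : ℕ) + 1))| *
          Real.exp ((r : ℝ) * ‖phiMap N (q + 1) lam‖)) := by
      rw [hrr]
      exact master_integrable N q hN hq hpe t₀ ht₀
    have hlap := analyticAt_laplace (μ := (volume : Measure (Fin N → ℝ)))
      (fun lam : Fin N → ℝ => vdm lam ^ 2 *
        Real.exp (∑ a, ∑ k : Fin (q + 1), t₀ k * lam a ^ ((k : ℕ) + 1)))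
      (phiMap N (q + 1)) hgcont.aestronglyMeasurable
      (continuous_phiMap N (q + 1)).aestronglyMeasurable hrpos hint
    have hZeq : Z = fun t : Fin (q + 1) → ℝ => (1 / (N.factorial : ℝ)) *
        ((fun s : Fin (q + 1) → ℝ => ∫ lam : Fin N → ℝ,
          (vdm lam ^ 2 * Real.exp (∑ a, ∑ k : Fin (q + 1), t₀ k * lam a ^ ((k : ℕ) + 1))) *
            Real.exp (phiMap N (q + 1) lam s)) (t - t₀)) := by
      funext t
      rw [hZ t]
      congr 1
      refine integral_congr_ae (Filter.Eventually.of_forall fun lam => ?_)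
      beta_reduce
      have h1 : ∀ u : Fin (q + 1) → ℝ,
          (∑ a, ∑ k : Fin (q + 1), u k * lam a ^ ((k : ℕ) + 1))
          = ∑ k : Fin (q + 1), u k * ∑ a, lam a ^ ((k : ℕ) + 1) := by
        intro u
        rw [Finset.sum_comm]
        exact Finset.sum_congr rfl fun k _ => (Finset.mul_sum _ _ _).symm
      rw [mul_assoc, ← Real.exp_add, phiMap_apply]
      congr 2
      have h2 : ∀ k : Fin (q + 1), (t - t₀) k = t k - t₀ k := fun k => rfl
      rw [h1 t, h1 t₀, ← Finset.sum_add_distrib]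
      refine Finset.sum_congr rfl fun k _ => ?_
      rw [h2 k]
      ring
    rw [hZeq]
    refine analyticAt_const.mul ?_
    have hsub : AnalyticAt ℝ (fun t : Fin (q + 1) → ℝ => t - t₀) t₀ :=
      analyticAt_id.sub analyticAt_const
    have h0 : AnalyticAt ℝ (fun s : Fin (q + 1) → ℝ => ∫ lam : Fin N → ℝ,
        (vdm lam ^ 2 * Real.exp (∑ a, ∑ k : Fin (q + 1), t₀ k * lam a ^ ((k : ℕ) + 1))) *
          Real.exp (phiMap N (q + 1) lam s)) ((fun t : Fin (q + 1) → ℝ => t - t₀) t₀) := by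
      have : (fun t : Fin (q + 1) → ℝ => t - t₀) t₀ = 0 := sub_self t₀
      rw [this]
      exact hlap
    have hc := AnalyticAt.comp (g := fun s : Fin (q + 1) → ℝ => ∫ lam : Fin N → ℝ,
        (vdm lam ^ 2 * Real.exp (∑ a, ∑ k : Fin (q + 1), t₀ k * lam a ^ ((k : ℕ) + 1))) *
          Real.exp (phiMap N (q + 1) lam s)) (f := fun t : Fin (q + 1) → ℝ => t - t₀) h0 hsub
    exact hc
  refine ⟨?_, ?_⟩
  · have hAOn : AnalyticOnNhd ℝ Z { t : Fin (q + 1) → ℝ | t (Fin.last q) < 0 } :=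
      fun t' ht'' => hA t' ht''
    exact hAOn.contDiffOn hUopen.uniqueDiffOn
  · intro t ht
    have ht' : t (Fin.last q) < 0 := ht
    -- scaling identity
    have hscale : ∀ s : ℝ, 0 < s →
        Z (fun k : Fin (q + 1) => s ^ ((k : ℕ) + 1) * t k) = (s ^ (N * N))⁻¹ * Z t := by
      intro s hs
      have hs0 : s ≠ 0 := ne_of_gt hs
      have key : ∀ lam : Fin N → ℝ,
          (fun x : Fin N → ℝ => vdm x ^ 2 *
            Real.exp (∑ a, ∑ k : Fin (q + 1), t k * x a ^ ((k : ℕ) + 1))) (s • lam)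
          = s ^ (2 * (∑ i : Fin N, (Finset.Ioi i).card)) *
            (vdm lam ^ 2 * Real.exp (∑ a, ∑ k : Fin (q + 1),
              (s ^ ((k : ℕ) + 1) * t k) * lam a ^ ((k : ℕ) + 1))) := by
        intro lam
        simp only []
        rw [vdm_smul, mul_pow, ← pow_mul]
        have hexp : (∑ a, ∑ k : Fin (q + 1), t k * (s • lam) a ^ ((k : ℕ) + 1))
            = ∑ a, ∑ k : Fin (q + 1), (s ^ ((k : ℕ) + 1) * t k) * lam a ^ ((k : ℕ) + 1) := by
          refine Finset.sum_congr rfl fun a _ => Finset.sum_congr rfl fun k _ => ?_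
          simp only [Pi.smul_apply, smul_eq_mul, mul_pow]
          ring
        rw [hexp, mul_comm (∑ i : Fin N, (Finset.Ioi i).card) 2]
        ring
      have hcv := MeasureTheory.Measure.integral_comp_smul (μ := (volume : Measure (Fin N → ℝ)))
        (fun x : Fin N → ℝ => vdm x ^ 2 *
          Real.exp (∑ a, ∑ k : Fin (q + 1), t k * x a ^ ((k : ℕ) + 1))) s
      rw [Module.finrank_fin_fun] at hcv
      have h2 : (∫ lam : Fin N → ℝ, (fun x : Fin N → ℝ => vdm x ^ 2 *
            Real.exp (∑ a, ∑ k : Fin (q + 1), t k * x a ^ ((k : ℕ) + 1))) (s • lam))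
          = s ^ (2 * (∑ i : Fin N, (Finset.Ioi i).card)) *
            ∫ lam : Fin N → ℝ, vdm lam ^ 2 * Real.exp (∑ a, ∑ k : Fin (q + 1),
              (s ^ ((k : ℕ) + 1) * t k) * lam a ^ ((k : ℕ) + 1)) := by
        rw [← MeasureTheory.integral_const_mul]
        exact integral_congr_ae (Filter.Eventually.of_forall fun lam => key lam)
      rw [h2] at hcv
      have habs : |(s ^ N)⁻¹| = (s ^ N)⁻¹ := abs_of_nonneg (by positivity)
      rw [habs, smul_eq_mul] at hcv
      rw [hZ, hZ t]
      have hBσ : (∫ lam : Fin N → ℝ, vdm lam ^ 2 * Real.exp (∑ a, ∑ k : Fin (q + 1),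
            (s ^ ((k : ℕ) + 1) * t k) * lam a ^ ((k : ℕ) + 1)))
          = (s ^ (2 * (∑ i : Fin N, (Finset.Ioi i).card)))⁻¹ * ((s ^ N)⁻¹ *
            ∫ lam : Fin N → ℝ, vdm lam ^ 2 *
              Real.exp (∑ a, ∑ k : Fin (q + 1), t k * lam a ^ ((k : ℕ) + 1))) := by
        rw [← hcv]
        field_simp
      have hNN : s ^ (N * N) = s ^ (2 * (∑ i : Fin N, (Finset.Ioi i).card)) * s ^ N := by
        rw [← pow_add, sum_Ioi_card N]
      rw [hBσ, hNN, mul_inv]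
      ring
    -- derivative computation
    have hdiff : DifferentiableAt ℝ Z t := (hA t ht').differentiableAt
    have hσder : HasDerivAt (fun s : ℝ => fun k : Fin (q + 1) => s ^ ((k : ℕ) + 1) * t k)
        (fun k : Fin (q + 1) => ((k : ℕ) + 1 : ℝ) * t k) 1 := by
      refine hasDerivAt_pi.2 fun k => ?_
      have h := (hasDerivAt_pow ((k : ℕ) + 1) (1 : ℝ)).mul_const (t k)
      simpa using h
    have hcomp : HasDerivAt (fun s : ℝ => Z (fun k : Fin (q + 1) => s ^ ((k : ℕ) + 1) * t k))
        (fderiv ℝ Z t (fun k : Fin (q + 1) => ((k : ℕ) + 1 : ℝ) * t k)) 1 := by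
      have h1 : HasFDerivAt Z (fderiv ℝ Z t)
          ((fun s : ℝ => fun k : Fin (q + 1) => s ^ ((k : ℕ) + 1) * t k) 1) := by
        have h2 : (fun k : Fin (q + 1) => (1:ℝ) ^ ((k : ℕ) + 1) * t k) = t := by
          funext k; rw [one_pow, one_mul]
        show HasFDerivAt Z (fderiv ℝ Z t) (fun k : Fin (q + 1) => (1:ℝ) ^ ((k : ℕ) + 1) * t k)
        rw [h2]
        exact hdiff.hasFDerivAt
      exact h1.comp_hasDerivAt 1 hσder
    have hEq : (fun s : ℝ => Z (fun k : Fin (q + 1) => s ^ ((k : ℕ) + 1) * t k))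
        =ᶠ[nhds 1] fun s : ℝ => (s ^ (N * N))⁻¹ * Z t := by
      filter_upwards [isOpen_Ioi.mem_nhds (Set.mem_Ioi.2 (zero_lt_one))] with s hs
      exact hscale s hs
    have hz : HasDerivAt (fun s : ℝ => (s ^ (N * N))⁻¹ * Z t) (-(N * N : ℝ) * Z t) 1 := by
      have h := (hasDerivAt_zpow (-((N * N : ℕ) : ℤ)) (1 : ℝ) (Or.inl one_ne_zero)).mul_const (Z t)
      have hfn : (fun s : ℝ => s ^ (-((N * N : ℕ) : ℤ)) * Z t)
          = fun s : ℝ => (s ^ (N * N))⁻¹ * Z t := by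
        funext s
        rw [zpow_neg, zpow_natCast]
      rw [hfn] at h
      refine h.congr_deriv ?_
      rw [one_zpow]
      push_cast
      ring
    have huniq : fderiv ℝ Z t (fun k : Fin (q + 1) => ((k : ℕ) + 1 : ℝ) * t k)
        = -(N * N : ℝ) * Z t := by
      have h1 : HasDerivAt (fun s : ℝ => (s ^ (N * N))⁻¹ * Z t)
          (fderiv ℝ Z t (fun k : Fin (q + 1) => ((k : ℕ) + 1 : ℝ) * t k)) 1 :=
        hcomp.congr_of_eventuallyEq hEq.symm
      exact h1.unique hz
    have hv : (fun k : Fin (q + 1) => ((k : ℕ) + 1 : ℝ) * t k)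
        = ∑ i : Fin (q + 1), (((i : ℕ) + 1 : ℝ) * t i) • (Pi.single i (1 : ℝ) : Fin (q + 1) → ℝ) := by
      funext k
      rw [Finset.sum_apply]
      simp [Pi.single_apply]
    have hdecomp : fderiv ℝ Z t (fun k : Fin (q + 1) => ((k : ℕ) + 1 : ℝ) * t k)
        = ∑ i : Fin (q + 1), ((i : ℕ) + 1 : ℝ) * t i * fderiv ℝ Z t (Pi.single i 1) := by
      rw [hv, map_sum]
      refine Finset.sum_congr rfl fun i _ => ?_
      rw [(fderiv ℝ Z t).map_smul]
      simp [smul_eq_mul, mul_assoc]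
    have hfin : (∑ i : Fin (q + 1), ((i : ℕ) + 1 : ℝ) * t i * fderiv ℝ Z t (Pi.single i 1))
        = -(N * N : ℝ) * Z t := by
      rw [← hdecomp, huniq]
    rw [hfin]
    push_cast
    ring
end

section
/- Let k ≥ 1, let φ be a 2k-times continuously differentiable real-valued function on an open interval I, and let c ∈ ℝ. For 0 ≤ s ≤ k let A_s(x) be the k×k Wronskian determinant of the k functions obtained from the list (φ, φ′, …, φ^{(k)}) by omitting φ^{(k−s)} (i.e. the (i,j) entry of A_s is the (i−1)-st derivative of the j-th remaining function). Then for every x ∈ I: det( φ^{(i+j−2)}(x) − c·φ^{(i+j−1)}(x) )_{i,j=1,…,k} = Σ_{s=0}^k (−c)^s A_s(x). (This is the finite truncation of the shifted tau-function expansion p_s(−[∂])τ of the generalized Burgers–Hopf hierarchy: of all 2^k multilinear terms only the k+1 'tail' terms survive.) -/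
open Matrix Finset

private def Sx (k : ℕ) (g : ℕ → ℝ) (c : ℝ) (t m : ℕ) : Matrix (Fin k) (Fin k) ℝ :=
  Matrix.of fun j i => if (j : ℕ) < m then g ((i : ℕ) + j) - c * g ((i : ℕ) + j + 1)
    else if (j : ℕ) ≤ t then g ((i : ℕ) + j) else g ((i : ℕ) + j + 1)

private def Qx (k : ℕ) (g : ℕ → ℝ) (c : ℝ) (t : ℕ) : Matrix (Fin k) (Fin k) ℝ :=
  Matrix.of fun j i => if (j : ℕ) < t then g ((i : ℕ) + j) - c * g ((i : ℕ) + j + 1)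
    else g ((i : ℕ) + j + 1)

private def Wx (k : ℕ) (g : ℕ → ℝ) (t : ℕ) : Matrix (Fin k) (Fin k) ℝ :=
  Matrix.of fun j i => if (j : ℕ) < t then g ((i : ℕ) + j) else g ((i : ℕ) + j + 1)

private lemma red (k : ℕ) (g : ℕ → ℝ) (c : ℝ) (t m : ℕ) (hm : m + 1 ≤ t) (ht : t < k) :
    (Sx k g c t (m + 1)).det = (Sx k g c t m).det := by
  have hne : (⟨m, by omega⟩ : Fin k) ≠ ⟨m + 1, by omega⟩ := by
    simp [Fin.ext_iff]
  have h : Sx k g c t m = (Sx k g c t (m + 1)).updateRow ⟨m, by omega⟩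
      ((Sx k g c t (m + 1)) ⟨m, by omega⟩ + c • (Sx k g c t (m + 1)) ⟨m + 1, by omega⟩) := by
    ext j i
    rcases eq_or_ne j (⟨m, by omega⟩ : Fin k) with hj | hj
    · subst hj
      simp only [Matrix.updateRow_self, Sx, Matrix.of_apply, Pi.add_apply, Pi.smul_apply,
        smul_eq_mul, Fin.val_mk]
      rw [if_neg (by omega), if_pos (by omega), if_pos (by omega),
        if_neg (by omega), if_pos (by omega)]
      simp only [Nat.add_assoc]
      ring
    · rw [Matrix.updateRow_ne hj]
      have hj' : (j : ℕ) ≠ m := fun h => hj (by simp [Fin.ext_iff, h])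
      simp only [Sx, Matrix.of_apply]
      by_cases h1 : (j : ℕ) < m
      · rw [if_pos h1, if_pos (show (j : ℕ) < m + 1 by omega)]
      · rw [if_neg h1, if_neg (show ¬ (j : ℕ) < m + 1 by omega)]
  rw [h, Matrix.det_updateRow_add_smul_self _ hne c]

private lemma redchain (k : ℕ) (g : ℕ → ℝ) (c : ℝ) (t : ℕ) (ht : t < k) :
    ∀ m, m ≤ t → (Sx k g c t m).det = (Sx k g c t 0).det := by
  intro m
  induction m with
  | zero => intro _; rfl
  | succ n ih => intro h; rw [red k g c t n h ht, ih (by omega)]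

private lemma Sx_zero (k : ℕ) (g : ℕ → ℝ) (c : ℝ) (t : ℕ) :
    Sx k g c t 0 = Wx k g (t + 1) := by
  ext j i
  simp only [Sx, Wx, Matrix.of_apply]
  rw [if_neg (by omega)]
  by_cases h : (j : ℕ) ≤ t
  · rw [if_pos h, if_pos (by omega)]
  · rw [if_neg h, if_neg (by omega)]

private lemma step (k : ℕ) (g : ℕ → ℝ) (c : ℝ) (t : ℕ) (ht : t < k) :
    (Qx k g c (t + 1)).det = (Wx k g (t + 1)).det + (-c) * (Qx k g c t).det := by
  have hQ : Qx k g c (t + 1) = (Qx k g c t).updateRow ⟨t, ht⟩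
      ((fun i : Fin k => g ((i : ℕ) + t)) + (-c) • fun i : Fin k => g ((i : ℕ) + t + 1)) := by
    ext j i
    rcases eq_or_ne j (⟨t, ht⟩ : Fin k) with hj | hj
    · subst hj
      simp only [Matrix.updateRow_self, Qx, Matrix.of_apply, Pi.add_apply, Pi.smul_apply,
        smul_eq_mul, Fin.val_mk]
      rw [if_pos (by omega)]
      ring
    · rw [Matrix.updateRow_ne hj]
      have hj' : (j : ℕ) ≠ t := fun h => hj (by simp [Fin.ext_iff, h])
      simp only [Qx, Matrix.of_apply]
      by_cases h1 : (j : ℕ) < t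
      · rw [if_pos (by omega), if_pos h1]
      · rw [if_neg (by omega), if_neg h1]
  have h1 : (Qx k g c t).updateRow ⟨t, ht⟩ (fun i : Fin k => g ((i : ℕ) + t)) =
      Sx k g c t t := by
    ext j i
    rcases eq_or_ne j (⟨t, ht⟩ : Fin k) with hj | hj
    · subst hj
      simp only [Matrix.updateRow_self, Sx, Matrix.of_apply, Fin.val_mk]
      rw [if_neg (by omega), if_pos (by omega)]
    · rw [Matrix.updateRow_ne hj]
      have hj' : (j : ℕ) ≠ t := fun h => hj (by simp [Fin.ext_iff, h])
      simp only [Qx, Sx, Matrix.of_apply]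
      by_cases h2 : (j : ℕ) < t
      · rw [if_pos h2, if_pos h2]
      · rw [if_neg h2, if_neg h2, if_neg (by omega)]
  have h2 : (Qx k g c t).updateRow ⟨t, ht⟩ (fun i : Fin k => g ((i : ℕ) + t + 1)) =
      Qx k g c t := by
    ext j i
    rcases eq_or_ne j (⟨t, ht⟩ : Fin k) with hj | hj
    · subst hj
      simp only [Matrix.updateRow_self, Qx, Matrix.of_apply, Fin.val_mk]
      try rw [if_neg (show ¬ t < t by omega)]
    · rw [Matrix.updateRow_ne hj]
  rw [hQ, Matrix.det_updateRow_add, h1, Matrix.det_updateRow_smul, h2,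
    redchain k g c t ht t le_rfl, Sx_zero]

private lemma main_sum (k : ℕ) (g : ℕ → ℝ) (c : ℝ) :
    ∀ t, t ≤ k → (Qx k g c t).det =
      ∑ s ∈ Finset.range (t + 1), (-c) ^ s * (Wx k g (t - s)).det := by
  intro t
  induction t with
  | zero =>
    intro _
    have h0 : Qx k g c 0 = Wx k g 0 := by
      ext j i
      simp only [Qx, Wx, Matrix.of_apply]
      rw [if_neg (by omega), if_neg (by omega)]
    simp [h0]
  | succ n ih =>
    intro h
    rw [step k g c n (by omega), ih (by omega),
      Finset.sum_range_succ' (fun s => (-c) ^ s * (Wx k g (n + 1 - s)).det) (n + 1),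
      Finset.mul_sum]
    have e : ∀ s ∈ Finset.range (n + 1),
        (-c) * ((-c) ^ s * (Wx k g (n - s)).det) =
        (-c) ^ (s + 1) * (Wx k g (n + 1 - (s + 1))).det := by
      intro s _
      rw [Nat.succ_sub_succ, pow_succ]
      ring
    rw [Finset.sum_congr rfl e]
    simp only [pow_zero, one_mul, Nat.sub_zero]
    ring

theorem stmt19 (k : ℕ) (hk : 1 ≤ k) (I : Set ℝ) (hI : IsOpen I)
    (φ : ℝ → ℝ) (hφ : ContDiffOn ℝ ((2 * k : ℕ) : ℕ∞) φ I) (c : ℝ) :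
    ∀ x ∈ I,
      Matrix.det (Matrix.of fun i j : Fin k =>
        iteratedDeriv ((i : ℕ) + (j : ℕ)) φ x -
          c * iteratedDeriv ((i : ℕ) + (j : ℕ) + 1) φ x) =
      ∑ s ∈ Finset.range (k + 1), (-c) ^ s *
        Matrix.det (Matrix.of fun i j : Fin k =>
          iteratedDeriv ((i : ℕ) + (if (j : ℕ) < k - s then (j : ℕ) else (j : ℕ) + 1))
            φ x) := by
  intro x hx
  set g : ℕ → ℝ := fun m => iteratedDeriv m φ x with hg
  have hL : (Matrix.of fun i j : Fin k =>
      iteratedDeriv ((i : ℕ) + (j : ℕ)) φ x -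
        c * iteratedDeriv ((i : ℕ) + (j : ℕ) + 1) φ x) = (Qx k g c k)ᵀ := by
    ext i j
    simp only [Matrix.of_apply, Matrix.transpose_apply, Qx]
    rw [if_pos j.isLt]
  have hR : ∀ s, (Matrix.of fun i j : Fin k =>
      iteratedDeriv ((i : ℕ) + (if (j : ℕ) < k - s then (j : ℕ) else (j : ℕ) + 1)) φ x)
      = (Wx k g (k - s))ᵀ := by
    intro s
    ext i j
    simp only [Matrix.of_apply, Matrix.transpose_apply, Wx]
    by_cases h : (j : ℕ) < k - s
    · rw [if_pos h, if_pos h]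
    · rw [if_neg h, if_neg h]
      simp only [hg]
      rw [← Nat.add_assoc]
  rw [hL, Matrix.det_transpose, main_sum k g c k le_rfl]
  apply Finset.sum_congr rfl
  intro s _
  rw [hR s, Matrix.det_transpose]
end
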